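/- Let P be a polynomial basis with P = X V, M = V^{-1} M_X V and O = V^{-1} O_X V. Then for any polynomial y = P a and any nonnegative integers i, j, the polynomial identity ∫^x x^i t^j y(t) dt = P (M^i O M^j a) holds, where ∫^x denotes the antiderivative (with zero constant) evaluated at x. -/
import Mathlib


open Polynomial Finset

/-- Matrix-vector product of an infinite matrix with a coefficient sequence. -/
noncomputable def matVec (M : ℕ → ℕ → ℝ) (v : ℕ → ℝ) : ℕ → ℝ := fun i => ∑' j, M i j * v j

/-- Product of infinite matrices (well defined for the row/column finite matrices used here). -/
noncomputable def matMul (A B : ℕ → ℕ → ℝ) : ℕ → ℕ → ℝ := fun i j => ∑' k, A i k * B k j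

/-- Powers of an infinite matrix. -/
noncomputable def matPow (M : ℕ → ℕ → ℝ) : ℕ → (ℕ → ℕ → ℝ)
  | 0 => fun i j => if i = j then (1 : ℝ) else 0
  | k + 1 => matMul (matPow M k) M

/-- Shift matrix `M_X` (multiplication by `x` in the power basis). -/
noncomputable def MX : ℕ → ℕ → ℝ := fun r c => if r = c + 1 then (1 : ℝ) else 0

/-- Differentiation matrix `N_X` in the power basis. -/
noncomputable def NXmat : ℕ → ℕ → ℝ := fun r c => if c = r + 1 then (r + 1 : ℝ) else 0

/-- Integration matrix `O_X` in the power basis. -/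
noncomputable def OX : ℕ → ℕ → ℝ := fun r c => if r = c + 1 then (1 : ℝ) / (c + 1) else 0

/-- Evaluation of a (real) polynomial at an infinite matrix. -/
noncomputable def polyEvalMat (p : Polynomial ℝ) (M : ℕ → ℕ → ℝ) : ℕ → ℕ → ℝ :=
  ∑ k ∈ Finset.range (p.natDegree + 1), p.coeff k • matPow M k

/-- Formal antiderivative (with zero constant term) of a polynomial. -/
noncomputable def antider (p : Polynomial ℝ) : Polynomial ℝ :=
  p.sum fun n c => Polynomial.C (c / (n + 1)) * Polynomial.X ^ (n + 1)

/-- support bound for a vector -/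
def Supp (v : ℕ → ℝ) (N : ℕ) : Prop := ∀ m, N ≤ m → v m = 0

/-- lower-banded matrix -/
def Band (A : ℕ → ℕ → ℝ) (d : ℕ) : Prop := ∀ r c, c + d < r → A r c = 0

lemma Supp.mono {v : ℕ → ℝ} {N N' : ℕ} (h : Supp v N) (hN : N ≤ N') : Supp v N' :=
  fun m hm => h m (le_trans hN hm)

lemma matVec_eq_sum {A : ℕ → ℕ → ℝ} {v : ℕ → ℝ} {N : ℕ} (hv : Supp v N) (r : ℕ) :
    matVec A v r = ∑ k ∈ range N, A r k * v k := by
  apply tsum_eq_sum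
  intro k hk
  rw [hv k (by simpa using hk), mul_zero]

lemma supp_matVec {A : ℕ → ℕ → ℝ} {d : ℕ} (hA : Band A d) {v : ℕ → ℝ} {N : ℕ}
    (hv : Supp v N) : Supp (matVec A v) (N + d) := by
  intro r hr
  rw [matVec_eq_sum hv]
  apply Finset.sum_eq_zero
  intro k hk
  have hk' := Finset.mem_range.mp hk
  rw [hA r k (by omega), zero_mul]

lemma matMul_eq_sum {A B : ℕ → ℕ → ℝ} {e : ℕ} (hB : Band B e) {K : ℕ} {c : ℕ}
    (hK : c + e < K) (r : ℕ) :
    matMul A B r c = ∑ k ∈ range K, A r k * B k c := by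
  apply tsum_eq_sum
  intro k hk
  have hk' : K ≤ k := le_of_not_gt (fun h => hk (Finset.mem_range.mpr h))
  rw [hB k c (by omega), mul_zero]

lemma band_matMul {A B : ℕ → ℕ → ℝ} {d e : ℕ} (hA : Band A d) (hB : Band B e) :
    Band (matMul A B) (d + e) := by
  intro r c hrc
  rw [matMul_eq_sum hB (K := c + e + 1) (by omega)]
  apply Finset.sum_eq_zero
  intro k hk
  have hk' := Finset.mem_range.mp hk
  by_cases h : k + d < r
  · rw [hA r k h, zero_mul]
  · rw [hB k c (by omega), mul_zero]

lemma matVec_matMul {A B : ℕ → ℕ → ℝ} {d e : ℕ} (hA : Band A d) (hB : Band B e)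
    {v : ℕ → ℝ} {N : ℕ} (hv : Supp v N) :
    matVec (matMul A B) v = matVec A (matVec B v) := by
  funext r
  have hBv : Supp (matVec B v) (N + e) := supp_matVec hB hv
  rw [matVec_eq_sum hv, matVec_eq_sum hBv]
  have : ∀ k ∈ range (N + e), A r k * matVec B v k
      = A r k * ∑ jj ∈ range N, B k jj * v jj := by
    intro k _; rw [matVec_eq_sum hv]
  rw [Finset.sum_congr rfl this]
  have h2 : ∀ jj ∈ range N, matMul A B r jj * v jj
      = (∑ k ∈ range (N + e), A r k * B k jj) * v jj := by
    intro jj hjj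
    rw [matMul_eq_sum hB (K := N + e) (by have := Finset.mem_range.mp hjj; omega)]
  rw [Finset.sum_congr rfl h2]
  simp_rw [Finset.sum_mul, Finset.mul_sum]
  rw [Finset.sum_comm]
  congr 1; funext; congr 1; funext; ring

lemma band_MX : Band MX 1 := by
  intro r c h; simp only [MX]; rw [if_neg (by omega)]

lemma band_OX : Band OX 1 := by
  intro r c h; simp only [OX]; rw [if_neg (by omega)]

lemma matVec_id {v : ℕ → ℝ} {N : ℕ} (hv : Supp v N) :
    matVec (fun i j => if i = j then (1 : ℝ) else 0) v = v := by
  funext r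
  rw [matVec_eq_sum (hv.mono (le_max_right r.succ N)) ]
  rw [Finset.sum_eq_single r]
  · simp
  · intro b _ hb; rw [if_neg (fun h => hb h.symm), zero_mul]
  · intro h; exact absurd (Finset.mem_range.mpr (lt_of_lt_of_le (Nat.lt_succ_self r) (le_max_left _ _))) h

lemma band_id : Band (fun i j => if i = j then (1 : ℝ) else 0) 0 := by
  intro r c h; simp only []; rw [if_neg (by omega)]

lemma band_matPow {M : ℕ → ℕ → ℝ} (hM : Band M 1) (k : ℕ) : Band (matPow M k) k := by
  induction k with
  | zero => exact band_id
  | succ k ih => exact band_matMul ih hM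

lemma matVec_MX {v : ℕ → ℝ} (r : ℕ) :
    matVec MX v r = if r = 0 then 0 else v (r - 1) := by
  cases r with
  | zero =>
    simp only [if_pos rfl, matVec]
    have : ∀ k : ℕ, MX 0 k * v k = 0 := by
      intro k; simp [MX]
    simp_rw [this]; exact tsum_zero
  | succ r =>
    simp only [Nat.succ_ne_zero, if_neg, matVec, Nat.add_sub_cancel]
    rw [tsum_eq_single r]
    · simp [MX]
    · intro b hb; simp only [MX]; rw [if_neg (by omega), zero_mul]

lemma matVec_OX {v : ℕ → ℝ} (r : ℕ) :
    matVec OX v r = if r = 0 then 0 else v (r - 1) / r := by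
  cases r with
  | zero =>
    simp only [if_pos rfl, matVec]
    have : ∀ k : ℕ, OX 0 k * v k = 0 := by
      intro k; simp [OX]
    simp_rw [this]; exact tsum_zero
  | succ r =>
    simp only [Nat.succ_ne_zero, if_neg, matVec, Nat.add_sub_cancel]
    rw [tsum_eq_single r]
    · simp only [OX, if_pos rfl]
      push_cast; ring
    · intro b hb; simp only [OX]; rw [if_neg (by omega), zero_mul]

lemma supp_coeff (q : Polynomial ℝ) : Supp (fun k => q.coeff k) (q.natDegree + 1) := by
  intro m hm
  exact Polynomial.coeff_eq_zero_of_natDegree_lt (by omega)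

lemma coeff_X_mul' (q : Polynomial ℝ) (r : ℕ) :
    (Polynomial.X * q).coeff r = matVec MX (fun k => q.coeff k) r := by
  rw [matVec_MX]
  cases r with
  | zero => simp
  | succ r => simp [Polynomial.coeff_X_mul]

lemma coeff_antider (q : Polynomial ℝ) (r : ℕ) :
    (antider q).coeff r = matVec OX (fun k => q.coeff k) r := by
  rw [matVec_OX, antider, Polynomial.sum_def, Polynomial.finset_sum_coeff]
  simp only [Polynomial.coeff_C_mul, Polynomial.coeff_X_pow]
  cases r with
  | zero =>
    simp only [if_pos rfl]
    apply Finset.sum_eq_zero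
    intro m _
    rw [if_neg (by omega), mul_zero]
  | succ r =>
    simp only [Nat.succ_ne_zero, if_neg, Nat.add_sub_cancel]
    by_cases hr : r ∈ q.support
    · rw [Finset.sum_eq_single r]
      · simp only [if_pos rfl, mul_one]
        push_cast; ring
      · intro b _ hb; rw [if_neg (by omega), mul_zero]
      · intro h; exact absurd hr h
    · have hq : q.coeff r = 0 := Polynomial.notMem_support_iff.mp hr
      rw [hq, zero_div]
      apply Finset.sum_eq_zero
      intro m hm
      by_cases hmr : m = r
      · exact absurd (hmr ▸ hm) hr
      · rw [if_neg (by omega), mul_zero]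

lemma coeff_X_pow_mul' (i : ℕ) (q : Polynomial ℝ) :
    (fun k => (Polynomial.X ^ i * q).coeff k)
      = matVec (matPow MX i) (fun k => q.coeff k) := by
  induction i generalizing q with
  | zero =>
    simp only [pow_zero, one_mul, matPow]
    exact (matVec_id (supp_coeff q)).symm
  | succ i ih =>
    have h1 : Polynomial.X ^ (i + 1) * q = Polynomial.X ^ i * (Polynomial.X * q) := by
      ring
    rw [h1]
    have h2 : (fun k => (Polynomial.X * q).coeff k) = matVec MX (fun k => q.coeff k) := by
      funext r; exact coeff_X_mul' q r
    rw [show matPow MX (i+1) = matMul (matPow MX i) MX from rfl,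
      matVec_matMul (band_matPow band_MX i) band_MX (supp_coeff q), ← h2]
    exact ih (Polynomial.X * q)

section VW
variable (P : ℕ → Polynomial ℝ) (hdeg : ∀ i, (P i).degree = i)
  (V : ℕ → ℕ → ℝ) (hV : ∀ i j, V i j = (P j).coeff i)

include hdeg hV

lemma band_V : Band V 0 := by
  intro r c h
  rw [hV]
  exact Polynomial.coeff_eq_zero_of_degree_lt (by rw [hdeg]; exact_mod_cast (by omega : c < r))

lemma V_diag_ne (c : ℕ) : V c c ≠ 0 := by
  rw [hV]
  have hd := hdeg c
  have hnd : (P c).natDegree = c := Polynomial.natDegree_eq_of_degree_eq_some hd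
  have hne : P c ≠ 0 := fun h => by simp [h] at hd
  have := Polynomial.leadingCoeff_ne_zero.mpr hne
  rwa [Polynomial.leadingCoeff, hnd] at this

lemma band_W (W : ℕ → ℕ → ℝ)
    (hWV : ∀ i j, matMul W V i j = if i = j then 1 else 0) : Band W 0 := by
  intro r c h
  induction c using Nat.strong_induction_on with
  | _ c ih =>
    have hsum := hWV r c
    rw [matMul_eq_sum (A := W) (band_V P hdeg V hV) (K := c + 1) (by omega) r,
      if_neg (by omega)] at hsum
    rw [Finset.sum_range_succ] at hsum
    have hz : ∀ k ∈ range c, W r k * V k c = 0 := by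
      intro k hk
      rw [ih k (Finset.mem_range.mp hk) (by have := Finset.mem_range.mp hk; omega), zero_mul]
    rw [Finset.sum_eq_zero hz, zero_add] at hsum
    exact (mul_eq_zero.mp hsum).resolve_right (V_diag_ne P hdeg V hV c)

omit hdeg in
/-- coefficients of a linear combination of the `P` basis -/
lemma coeff_combo {a : ℕ → ℝ} {n : ℕ} (ha : Supp a n) (r : ℕ) :
    (∑ m ∈ Finset.range n, a m • P m).coeff r = matVec V a r := by
  rw [matVec_eq_sum ha, Polynomial.finset_sum_coeff]
  apply Finset.sum_congr rfl
  intro m _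
  rw [Polynomial.coeff_smul, hV, smul_eq_mul, mul_comm]

end VW

/-- VW cancellation on finitely supported vectors -/
lemma cancel_VW {V W : ℕ → ℕ → ℝ} (hVb : Band V 0) (hWb : Band W 0)
    (hVW : ∀ i j, matMul V W i j = if i = j then 1 else 0)
    {u : ℕ → ℝ} {N : ℕ} (hu : Supp u N) :
    matVec V (matVec W u) = u := by
  rw [← matVec_matMul hVb hWb hu]
  funext r
  rw [matVec_eq_sum hu]
  simp_rw [hVW]
  rw [Finset.sum_eq_single r]
  · by_cases hr : r < N
    · simp
    · simp [hu r (by omega)]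
  · intro b _ hb; rw [if_neg (fun h => hb h.symm), zero_mul]
  · intro h
    rw [hu r (by simpa using h), mul_zero]

lemma matVec_conj {V W A : ℕ → ℕ → ℝ} {dA : ℕ} (hVb : Band V 0) (hWb : Band W 0)
    (hAb : Band A dA) {v : ℕ → ℝ} {N : ℕ} (hv : Supp v N) :
    matVec (matMul (matMul W A) V) v = matVec W (matVec A (matVec V v)) := by
  rw [matVec_matMul (band_matMul hWb hAb) hVb hv,
    matVec_matMul hWb hAb (show Supp (matVec V v) (N + 0) from supp_matVec hVb hv)]

lemma matVec_powM {V W M : ℕ → ℕ → ℝ} (hVb : Band V 0) (hWb : Band W 0)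
    (hVW : ∀ i j, matMul V W i j = if i = j then 1 else 0)
    (hWV : ∀ i j, matMul W V i j = if i = j then 1 else 0)
    (hM : M = matMul (matMul W MX) V)
    (hMb : Band M 1)
    (i : ℕ) {b : ℕ → ℝ} {N : ℕ} (hb : Supp b N) :
    matVec (matPow M i) b = matVec W (matVec (matPow MX i) (matVec V b)) := by
  induction i generalizing b N with
  | zero =>
    rw [show matPow MX 0 = (fun i j => if i = j then (1:ℝ) else 0) from rfl,
      matVec_id (show Supp (matVec V b) (N + 0) from supp_matVec hVb hb),
      show matPow M 0 = (fun i j => if i = j then (1:ℝ) else 0) from rfl,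
      matVec_id hb]
    exact (cancel_VW hWb hVb hWV hb).symm
  | succ i ih =>
    have hMbN : Supp (matVec M b) (N + 1) := supp_matVec hMb hb
    rw [show matPow M (i+1) = matMul (matPow M i) M from rfl,
      matVec_matMul (band_matPow hMb i) hMb hb,
      ih hMbN, hM, matVec_conj hVb hWb band_MX hb,
      cancel_VW hVb hWb hVW (show Supp (matVec MX (matVec V b)) (N + 0 + 1) from
        supp_matVec band_MX (supp_matVec hVb hb)),
      show matPow MX (i+1) = matMul (matPow MX i) MX from rfl,
      matVec_matMul (band_matPow band_MX i) band_MX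
        (show Supp (matVec V b) (N + 0) from supp_matVec hVb hb)]

/-- `∫^x x^i t^j y(t) dt = P (M^i O M^j a)` for `y = P a`, where `∫^x` is the
antiderivative with zero constant term. -/
theorem int_monomial_in_basis
    (P : ℕ → Polynomial ℝ) (hdeg : ∀ i, (P i).degree = i)
    (V : ℕ → ℕ → ℝ) (hV : ∀ i j, V i j = (P j).coeff i)
    (W : ℕ → ℕ → ℝ)
    (hWV : ∀ i j, matMul W V i j = if i = j then 1 else 0)
    (hVW : ∀ i j, matMul V W i j = if i = j then 1 else 0)
    (M : ℕ → ℕ → ℝ) (hM : M = matMul (matMul W MX) V)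
    (O : ℕ → ℕ → ℝ) (hO : O = matMul (matMul W OX) V)
    (i j : ℕ)
    (a : ℕ → ℝ) (n : ℕ) (ha : ∀ m, n ≤ m → a m = 0) :
    Polynomial.X ^ i * antider (Polynomial.X ^ j * (∑ m ∈ Finset.range n, a m • P m)) =
      ∑ k ∈ Finset.range (i + j + n + 2),
        matVec (matMul (matMul (matPow M i) O) (matPow M j)) a k • P k := by
  have hSa : Supp a n := ha
  have bV : Band V 0 := band_V P hdeg V hV
  have bW : Band W 0 := band_W P hdeg V hV W hWV
  have bM : Band M 1 := hM ▸ band_matMul (band_matMul bW band_MX) bV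
  have bO : Band O 1 := hO ▸ band_matMul (band_matMul bW band_OX) bV
  set c := matVec (matMul (matMul (matPow M i) O) (matPow M j)) a with hc
  -- support facts
  have sVa : Supp (matVec V a) n := by simpa using supp_matVec bV hSa
  have sMXj : Supp (matVec (matPow MX j) (matVec V a)) (n + j) :=
    supp_matVec (band_matPow band_MX j) sVa
  have sOX : Supp (matVec OX (matVec (matPow MX j) (matVec V a))) (n + j + 1) :=
    supp_matVec band_OX sMXj
  set u := matVec (matPow MX i) (matVec OX (matVec (matPow MX j) (matVec V a))) with hu
  have su : Supp u (n + j + 1 + i) := supp_matVec (band_matPow band_MX i) sOX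
  -- c = matVec W u
  have hcW : c = matVec W u := by
    rw [hc,
      matVec_matMul (band_matMul (band_matPow bM i) bO) (band_matPow bM j) hSa,
      matVec_matMul (band_matPow bM i) bO (supp_matVec (band_matPow bM j) hSa),
      matVec_powM bV bW hVW hWV hM bM j hSa]
    have sMja : Supp (matVec W (matVec (matPow MX j) (matVec V a))) (n + j) := by
      simpa using supp_matVec bW sMXj
    rw [hO, matVec_conj bV bW band_OX sMja,
      cancel_VW bV bW hVW sMXj,
      matVec_powM bV bW hVW hWV hM bM i (show Supp (matVec W
        (matVec OX (matVec (matPow MX j) (matVec V a)))) (n + j + 1) from by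
          simpa using supp_matVec bW sOX),
      cancel_VW bV bW hVW sOX, hu]
  have sc : Supp c (i + j + n + 2) := by
    rw [hcW]
    exact (by simpa using supp_matVec bW su : Supp (matVec W u) (n + j + 1 + i)).mono
      (by omega)
  -- coefficientwise
  apply Polynomial.ext
  intro r
  rw [coeff_combo P V hV sc r, hcW, cancel_VW bV bW hVW su]
  -- LHS coefficients
  have h1 : (fun k => (∑ m ∈ Finset.range n, a m • P m).coeff k) = matVec V a := by
    funext k; exact coeff_combo P V hV hSa k
  have h2 : (fun k => (Polynomial.X ^ j * (∑ m ∈ Finset.range n, a m • P m)).coeff k)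
      = matVec (matPow MX j) (matVec V a) := by
    rw [coeff_X_pow_mul', h1]
  have h3 : (fun k => (antider (Polynomial.X ^ j * (∑ m ∈ Finset.range n, a m • P m))).coeff k)
      = matVec OX (matVec (matPow MX j) (matVec V a)) := by
    funext k
    rw [coeff_antider, h2]
  have h4 := congrFun (coeff_X_pow_mul' i
    (antider (Polynomial.X ^ j * (∑ m ∈ Finset.range n, a m • P m)))) r
  rw [h4, h3, ← hu]
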